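/- arXiv:2503.04932 — 7 statements merged into one kernel-verified Lean document; each statement's English description precedes it below -/
import Mathlib

section
/- Let r1, r2, r3 be positive integers and let A ∈ ℝ^{r1×r1}, B ∈ ℝ^{r2×r2}, C ∈ ℝ^{r3×r3} be symmetric negative semidefinite matrices. Suppose G, G' ∈ ℝ^{r1×(r2·r3)} satisfy the mode-1 matricized core update equation of the first-order implicit 3d-RAIL scheme: (I_{r1} − A) G' − G' (I_{r3} ⊗ B) − G' (C ⊗ I_{r2}) = G. Then ‖G'‖_F ≤ ‖G‖_F; i.e., the first-order implicit RAIL-3D core update before truncation is unconditionally stable. -/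
open Matrix Kronecker Finset

/-- Frobenius norm of a real matrix: square root of the sum of squares of its entries. -/
noncomputable def frobNorm {m n : Type*} [Fintype m] [Fintype n] (M : Matrix m n ℝ) : ℝ :=
  Real.sqrt (∑ i, ∑ j, (M i j) ^ 2)

/-- Auxiliary: a nonpositive quadratic form, written with the summation order that comes
out of right-multiplication. -/
lemma quad_form_nonpos {n : ℕ} (B : Matrix (Fin n) (Fin n) ℝ)
    (hB : ∀ x : Fin n → ℝ, x ⬝ᵥ B.mulVec x ≤ 0)
    (x : Fin n → ℝ) : ∑ j, x j * ∑ j', x j' * B j' j ≤ 0 := by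
  have h : ∑ j, x j * ∑ j', x j' * B j' j = x ⬝ᵥ B.mulVec x := by
    simp only [dotProduct, Matrix.mulVec, Finset.mul_sum]
    rw [Finset.sum_comm]
    exact Finset.sum_congr rfl fun j _ => Finset.sum_congr rfl fun j' _ => by ring
  linarith [hB x]

/-- The first-order implicit 3d-RAIL core update before truncation is unconditionally
stable: if `(I − A) G' − G' (I ⊗ B) − G' (C ⊗ I) = G` with `A, B, C` symmetric negative
semidefinite, then `‖G'‖_F ≤ ‖G‖_F`.  Columns are indexed by pairs `(k, j)` with the
second (mode-2) component `j` varying fastest, matching the Kronecker convention. -/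
theorem rail3d_core_update_stable
    {r1 r2 r3 : ℕ} (hr1 : 0 < r1) (hr2 : 0 < r2) (hr3 : 0 < r3)
    (A : Matrix (Fin r1) (Fin r1) ℝ) (B : Matrix (Fin r2) (Fin r2) ℝ)
    (C : Matrix (Fin r3) (Fin r3) ℝ)
    (hA : A.IsSymm) (hB : B.IsSymm) (hC : C.IsSymm)
    (hAneg : ∀ x : Fin r1 → ℝ, x ⬝ᵥ A.mulVec x ≤ 0)
    (hBneg : ∀ x : Fin r2 → ℝ, x ⬝ᵥ B.mulVec x ≤ 0)
    (hCneg : ∀ x : Fin r3 → ℝ, x ⬝ᵥ C.mulVec x ≤ 0)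
    (G G' : Matrix (Fin r1) (Fin r3 × Fin r2) ℝ)
    (heq : (1 - A) * G' - G' * ((1 : Matrix (Fin r3) (Fin r3) ℝ) ⊗ₖ B)
        - G' * (C ⊗ₖ (1 : Matrix (Fin r2) (Fin r2) ℝ)) = G) :
    frobNorm G' ≤ frobNorm G := by
  set N : ℝ := ∑ i, ∑ c, (G' i c) ^ 2 with hN
  set M : ℝ := ∑ i, ∑ c, (G i c) ^ 2 with hM
  set S : ℝ := ∑ i, ∑ c, G' i c * G i c with hS
  have hNnonneg : 0 ≤ N :=
    Finset.sum_nonneg fun i _ => Finset.sum_nonneg fun c _ => sq_nonneg _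
  have hMnonneg : 0 ≤ M :=
    Finset.sum_nonneg fun i _ => Finset.sum_nonneg fun c _ => sq_nonneg _
  -- term from A
  have hTA : (∑ i, ∑ c, G' i c * (A * G') i c) ≤ 0 := by
    have h : (∑ i, ∑ c, G' i c * (A * G') i c)
        = ∑ c : Fin r3 × Fin r2, (fun i => G' i c) ⬝ᵥ A.mulVec (fun i => G' i c) := by
      rw [Finset.sum_comm]
      simp [Matrix.mul_apply, dotProduct, Matrix.mulVec]
    rw [h]
    exact Finset.sum_nonpos fun c _ => hAneg _
  -- term from B
  have hTB : (∑ i, ∑ c, G' i c * (G' * ((1 : Matrix (Fin r3) (Fin r3) ℝ) ⊗ₖ B)) i c) ≤ 0 := by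
    have h : ∀ i, (∑ c : Fin r3 × Fin r2,
        G' i c * (G' * ((1 : Matrix (Fin r3) (Fin r3) ℝ) ⊗ₖ B)) i c)
        = ∑ k, ∑ j, G' i (k, j) * ∑ j', G' i (k, j') * B j' j := by
      intro i
      rw [Fintype.sum_prod_type]
      refine Finset.sum_congr rfl fun k _ => Finset.sum_congr rfl fun j _ => ?_
      congr 1
      simp [Matrix.mul_apply, Matrix.one_apply, Fintype.sum_prod_type, mul_ite, ite_mul]
    calc (∑ i, ∑ c, G' i c * (G' * ((1 : Matrix (Fin r3) (Fin r3) ℝ) ⊗ₖ B)) i c)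
        = ∑ i, ∑ k, ∑ j, G' i (k, j) * ∑ j', G' i (k, j') * B j' j :=
          Finset.sum_congr rfl fun i _ => h i
      _ ≤ 0 := Finset.sum_nonpos fun i _ => Finset.sum_nonpos fun k _ =>
          quad_form_nonpos B hBneg (fun j => G' i (k, j))
  -- term from C
  have hTC : (∑ i, ∑ c, G' i c * (G' * (C ⊗ₖ (1 : Matrix (Fin r2) (Fin r2) ℝ))) i c) ≤ 0 := by
    have h : ∀ i, (∑ c : Fin r3 × Fin r2,
        G' i c * (G' * (C ⊗ₖ (1 : Matrix (Fin r2) (Fin r2) ℝ))) i c)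
        = ∑ j, ∑ k, G' i (k, j) * ∑ k', G' i (k', j) * C k' k := by
      intro i
      rw [Fintype.sum_prod_type, Finset.sum_comm]
      refine Finset.sum_congr rfl fun j _ => Finset.sum_congr rfl fun k _ => ?_
      congr 1
      simp [Matrix.mul_apply, Matrix.one_apply, Fintype.sum_prod_type, mul_ite, ite_mul]
    calc (∑ i, ∑ c, G' i c * (G' * (C ⊗ₖ (1 : Matrix (Fin r2) (Fin r2) ℝ))) i c)
        = ∑ i, ∑ j, ∑ k, G' i (k, j) * ∑ k', G' i (k', j) * C k' k :=
          Finset.sum_congr rfl fun i _ => h i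
      _ ≤ 0 := Finset.sum_nonpos fun i _ => Finset.sum_nonpos fun j _ =>
          quad_form_nonpos C hCneg (fun k => G' i (k, j))
  -- S = N - TA - TB - TC
  have hSexp : S = N - (∑ i, ∑ c, G' i c * (A * G') i c)
      - (∑ i, ∑ c, G' i c * (G' * ((1 : Matrix (Fin r3) (Fin r3) ℝ) ⊗ₖ B)) i c)
      - (∑ i, ∑ c, G' i c * (G' * (C ⊗ₖ (1 : Matrix (Fin r2) (Fin r2) ℝ))) i c) := by
    rw [hS, hN]
    simp only [← heq, Matrix.sub_apply, Matrix.sub_mul, Matrix.one_mul,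
      ← Finset.sum_sub_distrib]
    refine Finset.sum_congr rfl fun i _ => Finset.sum_congr rfl fun c _ => by ring
  have hNleS : N ≤ S := by rw [hSexp]; linarith
  -- Cauchy–Schwarz: S^2 ≤ N * M
  have hCS : S ^ 2 ≤ N * M := by
    have := Finset.sum_mul_sq_le_sq_mul_sq Finset.univ
      (fun p : Fin r1 × (Fin r3 × Fin r2) => G' p.1 p.2)
      (fun p : Fin r1 × (Fin r3 × Fin r2) => G p.1 p.2)
    simpa [Fintype.sum_prod_type, hS, hN, hM] using this
  have hNM : N ≤ M := by
    rcases eq_or_lt_of_le hNnonneg with h0 | h0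
    · linarith
    · have h1 : N ^ 2 ≤ S ^ 2 := by nlinarith
      nlinarith
  unfold frobNorm
  exact Real.sqrt_le_sqrt hNM
end

section
/- Let r1, r2, r3 be positive integers and let A ∈ ℝ^{r1×r1}, B ∈ ℝ^{r2×r2}, C ∈ ℝ^{r3×r3} be symmetric negative semidefinite matrices. Then the linear map on ℝ^{r1×(r2·r3)} defined by G ↦ (I_{r1} − A) G − G (I_{r3} ⊗ B) − G (C ⊗ I_{r2}) is bijective; in particular, for every right-hand side G the core update equation of the first-order implicit 3d-RAIL scheme has a unique solution G'. -/
open Matrix Kronecker Finset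

private lemma rail3d_trace_left {r1 : ℕ} {n : Type*} [Fintype n] (A : Matrix (Fin r1) (Fin r1) ℝ)
    (G : Matrix (Fin r1) n ℝ) :
    trace (Gᵀ * (A * G)) = ∑ c : n, (fun i => G i c) ⬝ᵥ A.mulVec (fun i => G i c) := by
  simp only [Matrix.trace, Matrix.diag, Matrix.mul_apply, Matrix.transpose_apply,
    dotProduct, mulVec]

private lemma rail3d_trace_right {r1 : ℕ} {n : Type*} [Fintype n] (M : Matrix n n ℝ)
    (G : Matrix (Fin r1) n ℝ) :
    trace (Gᵀ * (G * M)) = ∑ r : Fin r1, (fun p => G r p) ⬝ᵥ M.mulVec (fun p => G r p) := by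
  rw [Matrix.trace_mul_comm]
  simp only [Matrix.trace, Matrix.diag, Matrix.mul_apply, Matrix.transpose_apply,
    dotProduct, mulVec]
  refine Finset.sum_congr rfl fun r _ => ?_
  simp only [Finset.sum_mul, Finset.mul_sum]
  rw [Finset.sum_comm]
  exact Finset.sum_congr rfl fun p _ => Finset.sum_congr rfl fun q _ => by ring

private lemma rail3d_kron_one_left {r2 r3 : ℕ} (B : Matrix (Fin r2) (Fin r2) ℝ)
    (hBneg : ∀ x : Fin r2 → ℝ, x ⬝ᵥ B.mulVec x ≤ 0)
    (x : Fin r3 × Fin r2 → ℝ) :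
    x ⬝ᵥ ((1 : Matrix (Fin r3) (Fin r3) ℝ) ⊗ₖ B).mulVec x ≤ 0 := by
  have h : x ⬝ᵥ ((1 : Matrix (Fin r3) (Fin r3) ℝ) ⊗ₖ B).mulVec x
      = ∑ j : Fin r3, (fun k => x (j, k)) ⬝ᵥ B.mulVec (fun k => x (j, k)) := by
    simp only [dotProduct, mulVec, kroneckerMap_apply, Matrix.one_apply,
      Fintype.sum_prod_type, ite_mul, one_mul, zero_mul]
    refine Finset.sum_congr rfl fun j _ => Finset.sum_congr rfl fun k _ => ?_
    congr 1
    rw [Finset.sum_comm]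
    simp
  rw [h]
  exact Finset.sum_nonpos fun j _ => hBneg _

private lemma rail3d_kron_one_right {r2 r3 : ℕ} (C : Matrix (Fin r3) (Fin r3) ℝ)
    (hCneg : ∀ x : Fin r3 → ℝ, x ⬝ᵥ C.mulVec x ≤ 0)
    (x : Fin r3 × Fin r2 → ℝ) :
    x ⬝ᵥ (C ⊗ₖ (1 : Matrix (Fin r2) (Fin r2) ℝ)).mulVec x ≤ 0 := by
  have h : x ⬝ᵥ (C ⊗ₖ (1 : Matrix (Fin r2) (Fin r2) ℝ)).mulVec x
      = ∑ k : Fin r2, (fun j => x (j, k)) ⬝ᵥ C.mulVec (fun j => x (j, k)) := by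
    simp only [dotProduct, mulVec, kroneckerMap_apply, Matrix.one_apply,
      Fintype.sum_prod_type, mul_ite, mul_one, mul_zero, ite_mul, zero_mul]
    rw [Finset.sum_comm]
    refine Finset.sum_congr rfl fun k _ => Finset.sum_congr rfl fun j _ => ?_
    congr 1
    simp
  rw [h]
  exact Finset.sum_nonpos fun k _ => hCneg _

/-- The linear map defining the core update equation of the first-order implicit
3d-RAIL scheme, `G ↦ (I − A) G − G (I ⊗ B) − G (C ⊗ I)`, is bijective when
`A, B, C` are symmetric negative semidefinite; in particular the core update
equation has a unique solution for every right-hand side. -/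
theorem rail3d_core_update_bijective
    {r1 r2 r3 : ℕ} (hr1 : 0 < r1) (hr2 : 0 < r2) (hr3 : 0 < r3)
    (A : Matrix (Fin r1) (Fin r1) ℝ) (B : Matrix (Fin r2) (Fin r2) ℝ)
    (C : Matrix (Fin r3) (Fin r3) ℝ)
    (hA : A.IsSymm) (hB : B.IsSymm) (hC : C.IsSymm)
    (hAneg : ∀ x : Fin r1 → ℝ, x ⬝ᵥ A.mulVec x ≤ 0)
    (hBneg : ∀ x : Fin r2 → ℝ, x ⬝ᵥ B.mulVec x ≤ 0)
    (hCneg : ∀ x : Fin r3 → ℝ, x ⬝ᵥ C.mulVec x ≤ 0) :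
    Function.Bijective (fun G : Matrix (Fin r1) (Fin r3 × Fin r2) ℝ =>
      (1 - A) * G - G * ((1 : Matrix (Fin r3) (Fin r3) ℝ) ⊗ₖ B)
        - G * (C ⊗ₖ (1 : Matrix (Fin r2) (Fin r2) ℝ))) := by
  set K₁ : Matrix (Fin r3 × Fin r2) (Fin r3 × Fin r2) ℝ :=
    (1 : Matrix (Fin r3) (Fin r3) ℝ) ⊗ₖ B with hK₁
  set K₂ : Matrix (Fin r3 × Fin r2) (Fin r3 × Fin r2) ℝ :=
    C ⊗ₖ (1 : Matrix (Fin r2) (Fin r2) ℝ) with hK₂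
  -- the map as a linear map
  let φ : Matrix (Fin r1) (Fin r3 × Fin r2) ℝ →ₗ[ℝ] Matrix (Fin r1) (Fin r3 × Fin r2) ℝ :=
    { toFun := fun G => (1 - A) * G - G * K₁ - G * K₂
      map_add' := fun x y => by
        simp only [Matrix.mul_add, Matrix.add_mul]
        abel
      map_smul' := fun c x => by
        simp only [Matrix.mul_smul, Matrix.smul_mul, smul_sub, RingHom.id_apply] }
  -- kernel is trivial
  have hker : ∀ G : Matrix (Fin r1) (Fin r3 × Fin r2) ℝ,
      (1 - A) * G - G * K₁ - G * K₂ = 0 → G = 0 := by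
    intro G hG
    rw [Matrix.sub_mul, Matrix.one_mul] at hG
    have h3 : G = A * G + G * K₁ + G * K₂ := by
      rw [← sub_eq_zero, ← hG]; abel
    have htr : trace (Gᵀ * G)
        = trace (Gᵀ * (A * G)) + trace (Gᵀ * (G * K₁)) + trace (Gᵀ * (G * K₂)) := by
      have h4 := congrArg (fun M => trace (Gᵀ * M)) h3
      simpa [Matrix.mul_add] using h4
    have h1 : trace (Gᵀ * (A * G)) ≤ 0 := by
      rw [rail3d_trace_left]
      exact Finset.sum_nonpos fun c _ => hAneg _
    have h2 : trace (Gᵀ * (G * K₁)) ≤ 0 := by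
      rw [rail3d_trace_right]
      exact Finset.sum_nonpos fun r _ => rail3d_kron_one_left B hBneg _
    have h4 : trace (Gᵀ * (G * K₂)) ≤ 0 := by
      rw [rail3d_trace_right]
      exact Finset.sum_nonpos fun r _ => rail3d_kron_one_right C hCneg _
    have hsq : trace (Gᵀ * G) = ∑ c : Fin r3 × Fin r2, ∑ i : Fin r1, G i c * G i c := by
      simp [Matrix.trace, Matrix.diag, Matrix.mul_apply]
    have hnonneg : (0 : ℝ) ≤ trace (Gᵀ * G) := by
      rw [hsq]
      exact Finset.sum_nonneg fun c _ => Finset.sum_nonneg fun i _ => mul_self_nonneg _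
    have hzero : trace (Gᵀ * G) = 0 := le_antisymm (by linarith) hnonneg
    rw [hsq] at hzero
    ext i c
    have h5 := (Finset.sum_eq_zero_iff_of_nonneg
      (fun c _ => Finset.sum_nonneg fun i _ => mul_self_nonneg (G i c))).mp hzero c
      (Finset.mem_univ c)
    have h6 := (Finset.sum_eq_zero_iff_of_nonneg
      (fun i _ => mul_self_nonneg (G i c))).mp h5 i (Finset.mem_univ i)
    simpa using mul_self_eq_zero.mp h6
  have hinj : Function.Injective φ := by
    intro a b hab
    have : φ (a - b) = 0 := by rw [map_sub, hab, sub_self]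
    have := hker (a - b) this
    exact sub_eq_zero.mp this
  exact ⟨hinj, LinearMap.injective_iff_surjective.mp hinj⟩
end

section
/- Let D ∈ ℝ^{r1×r1}, E ∈ ℝ^{r2×r2}, F ∈ ℝ^{r3×r3} be diagonal matrices with all diagonal entries ≤ 0, and suppose G̃', G̃ ∈ ℝ^{r1×(r2·r3)} satisfy (I_{r1} − D) G̃' − G̃' (I_{r3} ⊗ E) − G̃' (F ⊗ I_{r2}) = G̃. Then for every i, j, k, the entry of G̃' in row i and column (j,k) equals α_{ijk} · G̃_{i,(j,k)} with amplification factor α_{ijk} = 1/(1 − D_{ii} − E_{jj} − F_{kk}), and 0 < α_{ijk} ≤ 1. -/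
open Matrix Kronecker Finset

/-- For diagonal matrices `D, E, F` with nonpositive diagonal entries, the diagonalized
core update equation `(I − D) G̃' − G̃' (I ⊗ E) − G̃' (F ⊗ I) = G̃` decouples entrywise:
the entry of `G̃'` in row `i` and column `(j,k)` equals `α_{ijk} G̃_{i,(j,k)}` with
amplification factor `α_{ijk} = 1/(1 − D_{ii} − E_{jj} − F_{kk})`, and `0 < α_{ijk} ≤ 1`.
Columns are indexed by pairs `(k, j)` with the mode-2 index `j` varying fastest. -/
theorem rail3d_diagonal_amplification
    {r1 r2 r3 : ℕ}
    (D : Matrix (Fin r1) (Fin r1) ℝ) (E : Matrix (Fin r2) (Fin r2) ℝ)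
    (F : Matrix (Fin r3) (Fin r3) ℝ)
    (hD : D.IsDiag) (hE : E.IsDiag) (hF : F.IsDiag)
    (hDneg : ∀ i, D i i ≤ 0) (hEneg : ∀ j, E j j ≤ 0) (hFneg : ∀ k, F k k ≤ 0)
    (G' G : Matrix (Fin r1) (Fin r3 × Fin r2) ℝ)
    (heq : (1 - D) * G' - G' * ((1 : Matrix (Fin r3) (Fin r3) ℝ) ⊗ₖ E)
        - G' * (F ⊗ₖ (1 : Matrix (Fin r2) (Fin r2) ℝ)) = G) :
    ∀ (i : Fin r1) (j : Fin r2) (k : Fin r3),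
      G' i (k, j) = (1 / (1 - D i i - E j j - F k k)) * G i (k, j) ∧
      0 < 1 / (1 - D i i - E j j - F k k) ∧
      1 / (1 - D i i - E j j - F k k) ≤ 1 := by
  intro i j k
  have hG := congrFun (congrFun heq i) (k, j)
  have h1 : (((1 - D) * G' : Matrix (Fin r1) (Fin r3 × Fin r2) ℝ)) i (k, j) = (1 - D i i) * G' i (k, j) := by
    rw [Matrix.mul_apply, Finset.sum_eq_single i]
    · simp [Matrix.sub_apply, Matrix.one_apply]
    · intro b _ hb
      simp [Matrix.sub_apply, Matrix.one_apply_ne (Ne.symm hb), hD (Ne.symm hb)]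
    · simp
  have h2 : (G' * ((1 : Matrix (Fin r3) (Fin r3) ℝ) ⊗ₖ E)) i (k, j)
      = G' i (k, j) * E j j := by
    rw [Matrix.mul_apply, Finset.sum_eq_single (k, j)]
    · simp [Matrix.kroneckerMap_apply]
    · rintro ⟨k', j'⟩ _ hb
      by_cases hk : k' = k
      · subst hk
        have hj : j' ≠ j := fun h => hb (by simp [h])
        simp [Matrix.kroneckerMap_apply, hE hj]
      · simp [Matrix.kroneckerMap_apply, Matrix.one_apply_ne hk]
    · simp
  have h3 : (G' * (F ⊗ₖ (1 : Matrix (Fin r2) (Fin r2) ℝ))) i (k, j)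
      = G' i (k, j) * F k k := by
    rw [Matrix.mul_apply, Finset.sum_eq_single (k, j)]
    · simp [Matrix.kroneckerMap_apply]
    · rintro ⟨k', j'⟩ _ hb
      by_cases hj : j' = j
      · subst hj
        have hk : k' ≠ k := fun h => hb (by simp [h])
        simp [Matrix.kroneckerMap_apply, hF hk]
      · simp [Matrix.kroneckerMap_apply, Matrix.one_apply_ne hj]
    · simp
  simp only [Matrix.sub_apply, h1, h2, h3] at hG
  have hc1 : (1 : ℝ) ≤ 1 - D i i - E j j - F k k := by
    have := hDneg i; have := hEneg j; have := hFneg k; linarith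
  have hc0 : (0 : ℝ) < 1 - D i i - E j j - F k k := by linarith
  refine ⟨?_, by positivity, ?_⟩
  · field_simp
    linarith [hG]
  · rw [div_le_one hc0]; exact hc1
end

section
/- Let U ∈ ℝ^{N1×N2×N3} be a third-order tensor and let (r̃1, r̃2, r̃3) be given ranks. For each n ∈ {1,2,3}, let Pₙ ∈ ℝ^{Nₙ×Nₙ} be an orthogonal projection of rank at most r̃ₙ that minimizes ‖U_{(n)} − P U_{(n)}‖_F over all orthogonal projections P of rank at most r̃ₙ (equivalently, Pₙ projects onto the span of r̃ₙ dominant left singular vectors of the mode-n matricization U_{(n)}), and set U* = U ×₁ P₁ ×₂ P₂ ×₃ P₃ (the truncated HOSVD of U). Then for every third-order tensor X ∈ ℝ^{N1×N2×N3} of multilinear rank at most (r̃1, r̃2, r̃3), one has ‖U − U*‖ ≤ √3 · ‖U − X‖, where ‖·‖ is the Frobenius norm; i.e., the truncated HOSVD is quasi-optimal with constant √3. -/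
open Matrix Finset

namespace HOSVD

/-- Frobenius norm of a real matrix. -/
noncomputable def mnorm {m n : Type*} [Fintype m] [Fintype n] (M : Matrix m n ℝ) : ℝ :=
  Real.sqrt (∑ i, ∑ j, (M i j) ^ 2)

/-- Frobenius norm of a third-order tensor. -/
noncomputable def tnorm {N1 N2 N3 : ℕ} (U : Fin N1 → Fin N2 → Fin N3 → ℝ) : ℝ :=
  Real.sqrt (∑ i, ∑ j, ∑ k, (U i j k) ^ 2)

/-- Mode-1 product of a third-order tensor with a matrix. -/
def mode1 {N1 N2 N3 M : ℕ} (V : Matrix (Fin M) (Fin N1) ℝ)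
    (U : Fin N1 → Fin N2 → Fin N3 → ℝ) : Fin M → Fin N2 → Fin N3 → ℝ :=
  fun i' j k => ∑ i, V i' i * U i j k

/-- Mode-2 product of a third-order tensor with a matrix. -/
def mode2 {N1 N2 N3 M : ℕ} (V : Matrix (Fin M) (Fin N2) ℝ)
    (U : Fin N1 → Fin N2 → Fin N3 → ℝ) : Fin N1 → Fin M → Fin N3 → ℝ :=
  fun i j' k => ∑ j, V j' j * U i j k

/-- Mode-3 product of a third-order tensor with a matrix. -/
def mode3 {N1 N2 N3 M : ℕ} (V : Matrix (Fin M) (Fin N3) ℝ)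
    (U : Fin N1 → Fin N2 → Fin N3 → ℝ) : Fin N1 → Fin N2 → Fin M → ℝ :=
  fun i j k' => ∑ k, V k' k * U i j k

/-- Mode-1 matricization of a third-order tensor. -/
def mat1 {N1 N2 N3 : ℕ} (U : Fin N1 → Fin N2 → Fin N3 → ℝ) :
    Matrix (Fin N1) (Fin N2 × Fin N3) ℝ :=
  Matrix.of fun i p => U i p.1 p.2

/-- Mode-2 matricization of a third-order tensor. -/
def mat2 {N1 N2 N3 : ℕ} (U : Fin N1 → Fin N2 → Fin N3 → ℝ) :
    Matrix (Fin N2) (Fin N1 × Fin N3) ℝ :=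
  Matrix.of fun j p => U p.1 j p.2

/-- Mode-3 matricization of a third-order tensor. -/
def mat3 {N1 N2 N3 : ℕ} (U : Fin N1 → Fin N2 → Fin N3 → ℝ) :
    Matrix (Fin N3) (Fin N1 × Fin N2) ℝ :=
  Matrix.of fun k p => U p.1 p.2 k

/-- A third-order tensor has multilinear rank at most `(r1, r2, r3)` if it admits a
Tucker decomposition with core of size `r1 × r2 × r3`. -/
def HasMultilinearRankLE {N1 N2 N3 : ℕ} (X : Fin N1 → Fin N2 → Fin N3 → ℝ)
    (r1 r2 r3 : ℕ) : Prop :=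
  ∃ (G : Fin r1 → Fin r2 → Fin r3 → ℝ) (V1 : Matrix (Fin N1) (Fin r1) ℝ)
    (V2 : Matrix (Fin N2) (Fin r2) ℝ) (V3 : Matrix (Fin N3) (Fin r3) ℝ),
    X = fun i j k => ∑ a, ∑ b, ∑ c, V1 i a * V2 j b * V3 k c * G a b c

/-! ### Auxiliary material -/

noncomputable def msq {m n : Type*} [Fintype m] [Fintype n] (M : Matrix m n ℝ) : ℝ :=
  ∑ i, ∑ j, (M i j) ^ 2

lemma mnorm_eq_sqrt_msq {m n : Type*} [Fintype m] [Fintype n] (M : Matrix m n ℝ) :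
    mnorm M = Real.sqrt (msq M) := rfl

lemma msq_nonneg {m n : Type*} [Fintype m] [Fintype n] (M : Matrix m n ℝ) : 0 ≤ msq M := by
  apply Finset.sum_nonneg; intros; apply Finset.sum_nonneg; intros; positivity

lemma sum_mul_eq_trace {n m : Type*} [Fintype n] [Fintype m] (M N : Matrix n m ℝ) :
    ∑ i, ∑ j, M i j * N i j = Matrix.trace (Mᵀ * N) := by
  rw [Matrix.trace]
  simp only [Matrix.diag, Matrix.mul_apply, Matrix.transpose_apply]
  exact Finset.sum_comm

lemma mcross {n m : Type*} [Fintype n] [Fintype m] (P Q : Matrix n n ℝ)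
    (h : Pᵀ * Q = 0) (A B : Matrix n m ℝ) :
    ∑ i, ∑ j, (P * A) i j * ((Q * B) i j) = 0 := by
  rw [sum_mul_eq_trace, Matrix.transpose_mul, Matrix.mul_assoc, ← Matrix.mul_assoc Pᵀ, h,
    Matrix.zero_mul, Matrix.mul_zero, Matrix.trace_zero]

lemma msq_add {m n : Type*} [Fintype m] [Fintype n] (M N : Matrix m n ℝ) :
    msq (M + N) = msq M + msq N + 2 * ∑ i, ∑ j, M i j * N i j := by
  simp only [msq, Matrix.add_apply, Finset.mul_sum, ← Finset.sum_add_distrib]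
  congr 1; ext i; congr 1; ext j; ring

lemma msq_proj_le {n m : Type*} [Fintype n] [DecidableEq n] [Fintype m] (P : Matrix n n ℝ)
    (hs : P.IsSymm) (hi : P * P = P) (A : Matrix n m ℝ) :
    msq (P * A) ≤ msq A := by
  have hdecomp : A = P * A + ((1 - P : Matrix n n ℝ)) * A := by
    rw [← Matrix.add_mul]; simp
  have hcross : ∑ i, ∑ j, (P * A) i j * ((((1 - P : Matrix n n ℝ)) * A) i j) = 0 := by
    apply mcross
    rw [hs.eq, Matrix.mul_sub, Matrix.mul_one, hi, sub_self]
  calc msq (P * A) ≤ msq (P * A) + msq (((1 - P : Matrix n n ℝ)) * A) :=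
        le_add_of_nonneg_right (msq_nonneg _)
    _ = msq A := by conv_rhs => rw [hdecomp, msq_add, hcross, mul_zero, add_zero]

lemma exists_proj {N r : ℕ} (V : Matrix (Fin N) (Fin r) ℝ) :
    ∃ Q : Matrix (Fin N) (Fin N) ℝ, Q.IsSymm ∧ Q * Q = Q ∧ Q.rank ≤ r ∧ Q * V = V := by
  classical
  set W : Submodule ℝ (EuclideanSpace ℝ (Fin N)) := LinearMap.range (Matrix.toEuclideanLin V) with hW
  set Tc : EuclideanSpace ℝ (Fin N) →L[ℝ] EuclideanSpace ℝ (Fin N) :=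
    W.subtypeL ∘L Submodule.orthogonalProjectionOnto W with hTc
  set T : EuclideanSpace ℝ (Fin N) →ₗ[ℝ] EuclideanSpace ℝ (Fin N) := Tc.toLinearMap with hT
  set Q : Matrix (Fin N) (Fin N) ℝ := Matrix.toEuclideanLin.symm T with hQ
  have hQT : Matrix.toEuclideanLin Q = T := Matrix.toEuclideanLin.apply_symm_apply T
  have hTmem : ∀ v, T v ∈ W := fun v => (Submodule.orthogonalProjectionOnto W v).2
  have hTfix : ∀ v ∈ W, T v = v := by
    intro v hv
    simpa [hT, hTc] using Submodule.starProjection_eq_self_iff.mpr hv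
  have hmul : ∀ {m : ℕ} (A : Matrix (Fin N) (Fin m) ℝ),
      Matrix.toEuclideanLin (Q * A) = T ∘ₗ Matrix.toEuclideanLin A := by
    intro m A
    rw [Matrix.toEuclideanLin_eq_toLin, ← hQT, Matrix.toEuclideanLin_eq_toLin]
    exact Matrix.toLin_mul _ (PiLp.basisFun 2 ℝ (Fin N)) _ Q A
  have hidem : Q * Q = Q := by
    apply Matrix.toEuclideanLin.injective
    rw [hmul, hQT]
    exact LinearMap.ext fun v => hTfix (T v) (hTmem v)
  have hfixV : Q * V = V := by
    apply Matrix.toEuclideanLin.injective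
    rw [hmul]
    ext v i
    have : Matrix.toEuclideanLin V v ∈ W := ⟨v, rfl⟩
    simp [hTfix _ this]
  have hsymm : Q.IsSymm := by
    have h1 : Q.IsHermitian := by
      rw [Matrix.isHermitian_iff_isSymmetric, hQT]
      exact (ContinuousLinearMap.isSelfAdjoint_iff_isSymmetric.mp
        (isSelfAdjoint_starProjection W))
    simpa [Matrix.IsHermitian, Matrix.IsSymm] using h1
  have hrank : Q.rank ≤ r := by
    rw [Matrix.rank_eq_finrank_range_toLin Q (PiLp.basisFun 2 ℝ (Fin N)) (PiLp.basisFun 2 ℝ (Fin N)),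
      ← Matrix.toEuclideanLin_eq_toLin, hQT]
    have h1 : LinearMap.range T ≤ W := by
      rintro x ⟨v, rfl⟩; exact hTmem v
    calc Module.finrank ℝ (LinearMap.range T) ≤ Module.finrank ℝ W := Submodule.finrank_mono h1
      _ ≤ Module.finrank ℝ (EuclideanSpace ℝ (Fin r)) := LinearMap.finrank_range_le _
      _ = r := finrank_euclideanSpace_fin
  exact ⟨Q, hsymm, hidem, hrank, hfixV⟩

/-! ### Tensor-level lemmas -/

noncomputable def tsq {N1 N2 N3 : ℕ} (U : Fin N1 → Fin N2 → Fin N3 → ℝ) : ℝ :=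
  ∑ i, ∑ j, ∑ k, (U i j k) ^ 2

lemma tnorm_eq_sqrt_tsq {N1 N2 N3 : ℕ} (U : Fin N1 → Fin N2 → Fin N3 → ℝ) :
    tnorm U = Real.sqrt (tsq U) := rfl

noncomputable def tcross {N1 N2 N3 : ℕ} (A B : Fin N1 → Fin N2 → Fin N3 → ℝ) : ℝ :=
  ∑ i, ∑ j, ∑ k, A i j k * B i j k

lemma tsq_eq_msq1 {N1 N2 N3 : ℕ} (U : Fin N1 → Fin N2 → Fin N3 → ℝ) :
    tsq U = msq (mat1 U) := by
  simp [tsq, msq, mat1, Fintype.sum_prod_type]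

lemma tsq_eq_msq2 {N1 N2 N3 : ℕ} (U : Fin N1 → Fin N2 → Fin N3 → ℝ) :
    tsq U = msq (mat2 U) := by
  simp only [tsq, msq, mat2, Matrix.of_apply, Fintype.sum_prod_type]
  exact Finset.sum_comm

lemma tsq_eq_msq3 {N1 N2 N3 : ℕ} (U : Fin N1 → Fin N2 → Fin N3 → ℝ) :
    tsq U = msq (mat3 U) := by
  have h : msq (mat3 U) = ∑ k, ∑ i, ∑ j, (U i j k) ^ 2 := by
    simp [msq, mat3, Fintype.sum_prod_type]
  rw [h]
  show ∑ i, ∑ j, ∑ k, (U i j k) ^ 2 = _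
  calc ∑ i, ∑ j, ∑ k, (U i j k) ^ 2
      = ∑ i, ∑ k, ∑ j, (U i j k) ^ 2 := Finset.sum_congr rfl fun _ _ => Finset.sum_comm
    _ = ∑ k, ∑ i, ∑ j, (U i j k) ^ 2 := Finset.sum_comm

lemma sum3_rot {a b c : ℕ} (f : Fin a → Fin b → Fin c → ℝ) :
    ∑ i, ∑ j, ∑ k, f i j k = ∑ k, ∑ i, ∑ j, f i j k := by
  calc ∑ i, ∑ j, ∑ k, f i j k = ∑ i, ∑ k, ∑ j, f i j k :=
        Finset.sum_congr rfl fun _ _ => Finset.sum_comm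
    _ = ∑ k, ∑ i, ∑ j, f i j k := Finset.sum_comm

lemma tcross_eq1 {N1 N2 N3 : ℕ} (A B : Fin N1 → Fin N2 → Fin N3 → ℝ) :
    tcross A B = ∑ i, ∑ p, mat1 A i p * mat1 B i p := by
  simp [tcross, mat1, Fintype.sum_prod_type]

lemma tcross_eq2 {N1 N2 N3 : ℕ} (A B : Fin N1 → Fin N2 → Fin N3 → ℝ) :
    tcross A B = ∑ j, ∑ p, mat2 A j p * mat2 B j p := by
  simp only [tcross, mat2, Matrix.of_apply, Fintype.sum_prod_type]
  exact Finset.sum_comm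

lemma mat1_mode1 {N1 N2 N3 M : ℕ} (P : Matrix (Fin M) (Fin N1) ℝ)
    (U : Fin N1 → Fin N2 → Fin N3 → ℝ) : mat1 (mode1 P U) = P * mat1 U := by
  ext i p
  simp [mat1, mode1, Matrix.mul_apply]

lemma mat2_mode2 {N1 N2 N3 M : ℕ} (P : Matrix (Fin M) (Fin N2) ℝ)
    (U : Fin N1 → Fin N2 → Fin N3 → ℝ) : mat2 (mode2 P U) = P * mat2 U := by
  ext j p
  simp [mat2, mode2, Matrix.mul_apply]

lemma mat3_mode3 {N1 N2 N3 M : ℕ} (P : Matrix (Fin M) (Fin N3) ℝ)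
    (U : Fin N1 → Fin N2 → Fin N3 → ℝ) : mat3 (mode3 P U) = P * mat3 U := by
  ext k p
  simp [mat3, mode3, Matrix.mul_apply]

lemma tcross_mode1_zero {N1 N2 N3 : ℕ} (P Q : Matrix (Fin N1) (Fin N1) ℝ)
    (h : Pᵀ * Q = 0) (A B : Fin N1 → Fin N2 → Fin N3 → ℝ) :
    tcross (mode1 P A) (mode1 Q B) = 0 := by
  rw [tcross_eq1, mat1_mode1, mat1_mode1]
  exact mcross P Q h _ _

lemma tcross_mode2_zero {N1 N2 N3 : ℕ} (P Q : Matrix (Fin N2) (Fin N2) ℝ)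
    (h : Pᵀ * Q = 0) (A B : Fin N1 → Fin N2 → Fin N3 → ℝ) :
    tcross (mode2 P A) (mode2 Q B) = 0 := by
  rw [tcross_eq2, mat2_mode2, mat2_mode2]
  exact mcross P Q h _ _

lemma tsq_mode1_le {N1 N2 N3 : ℕ} (P : Matrix (Fin N1) (Fin N1) ℝ)
    (hs : P.IsSymm) (hi : P * P = P) (A : Fin N1 → Fin N2 → Fin N3 → ℝ) :
    tsq (mode1 P A) ≤ tsq A := by
  rw [tsq_eq_msq1, tsq_eq_msq1, mat1_mode1]
  exact msq_proj_le P hs hi _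

lemma tsq_mode2_le {N1 N2 N3 : ℕ} (P : Matrix (Fin N2) (Fin N2) ℝ)
    (hs : P.IsSymm) (hi : P * P = P) (A : Fin N1 → Fin N2 → Fin N3 → ℝ) :
    tsq (mode2 P A) ≤ tsq A := by
  rw [tsq_eq_msq2, tsq_eq_msq2, mat2_mode2]
  exact msq_proj_le P hs hi _

lemma mode1_mode2 {N1 N2 N3 M M' : ℕ} (P : Matrix (Fin M) (Fin N1) ℝ)
    (Q : Matrix (Fin M') (Fin N2) ℝ) (U : Fin N1 → Fin N2 → Fin N3 → ℝ) :
    mode1 P (mode2 Q U) = mode2 Q (mode1 P U) := by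
  funext i j k
  simp only [mode1, mode2, Finset.mul_sum]
  rw [Finset.sum_comm]
  exact Finset.sum_congr rfl fun a _ => Finset.sum_congr rfl fun b _ => by ring

lemma mode2_mode3 {N1 N2 N3 M M' : ℕ} (P : Matrix (Fin M) (Fin N2) ℝ)
    (Q : Matrix (Fin M') (Fin N3) ℝ) (U : Fin N1 → Fin N2 → Fin N3 → ℝ) :
    mode2 P (mode3 Q U) = mode3 Q (mode2 P U) := by
  funext i j k
  simp only [mode2, mode3, Finset.mul_sum]
  rw [Finset.sum_comm]
  exact Finset.sum_congr rfl fun a _ => Finset.sum_congr rfl fun b _ => by ring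

lemma mode1_sub_one {N1 N2 N3 : ℕ} (P : Matrix (Fin N1) (Fin N1) ℝ)
    (U : Fin N1 → Fin N2 → Fin N3 → ℝ) :
    mode1 ((1 - P : Matrix (Fin N1) (Fin N1) ℝ)) U = U - mode1 P U := by
  funext i j k
  simp [mode1, Matrix.sub_apply, Matrix.one_apply, sub_mul, Finset.sum_sub_distrib,
    ite_mul, Finset.sum_ite_eq]

lemma mode2_sub_one {N1 N2 N3 : ℕ} (P : Matrix (Fin N2) (Fin N2) ℝ)
    (U : Fin N1 → Fin N2 → Fin N3 → ℝ) :
    mode2 ((1 - P : Matrix (Fin N2) (Fin N2) ℝ)) U = U - mode2 P U := by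
  funext i j k
  simp [mode2, Matrix.sub_apply, Matrix.one_apply, sub_mul, Finset.sum_sub_distrib,
    ite_mul, Finset.sum_ite_eq]

lemma mode3_sub_one {N1 N2 N3 : ℕ} (P : Matrix (Fin N3) (Fin N3) ℝ)
    (U : Fin N1 → Fin N2 → Fin N3 → ℝ) :
    mode3 ((1 - P : Matrix (Fin N3) (Fin N3) ℝ)) U = U - mode3 P U := by
  funext i j k
  simp [mode3, Matrix.sub_apply, Matrix.one_apply, sub_mul, Finset.sum_sub_distrib,
    ite_mul, Finset.sum_ite_eq]

lemma mode1_tsub {N1 N2 N3 M : ℕ} (P : Matrix (Fin M) (Fin N1) ℝ)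
    (A B : Fin N1 → Fin N2 → Fin N3 → ℝ) :
    mode1 P (A - B) = mode1 P A - mode1 P B := by
  funext i j k
  simp [mode1, mul_sub, Finset.sum_sub_distrib]

lemma mode2_tsub {N1 N2 N3 M : ℕ} (P : Matrix (Fin M) (Fin N2) ℝ)
    (A B : Fin N1 → Fin N2 → Fin N3 → ℝ) :
    mode2 P (A - B) = mode2 P A - mode2 P B := by
  funext i j k
  simp [mode2, mul_sub, Finset.sum_sub_distrib]

lemma tsq_add3 {N1 N2 N3 : ℕ} (A B C : Fin N1 → Fin N2 → Fin N3 → ℝ)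
    (hab : tcross A B = 0) (hac : tcross A C = 0) (hbc : tcross B C = 0) :
    tsq (A + B + C) = tsq A + tsq B + tsq C := by
  have expand : tsq (A + B + C) = tsq A + tsq B + tsq C
      + 2 * tcross A B + 2 * tcross A C + 2 * tcross B C := by
    simp only [tsq, tcross, Pi.add_apply, Finset.mul_sum, ← Finset.sum_add_distrib]
    refine Finset.sum_congr rfl fun i _ => Finset.sum_congr rfl fun j _ =>
      Finset.sum_congr rfl fun k _ => by ring
  rw [expand, hab, hac, hbc]; ring

/-! ### Main theorem -/

/-- Quasi-optimality of the truncated HOSVD with constant `√3`: if each `Pₙ` is an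
orthogonal projection of rank at most `r̃ₙ` minimizing the mode-`n` projection error,
and `U* = U ×₁ P₁ ×₂ P₂ ×₃ P₃`, then `‖U − U*‖ ≤ √3 ‖U − X‖` for every tensor `X`
of multilinear rank at most `(r̃1, r̃2, r̃3)`. -/
theorem truncated_hosvd_quasi_optimal
    {N1 N2 N3 : ℕ} (U : Fin N1 → Fin N2 → Fin N3 → ℝ) (r1 r2 r3 : ℕ)
    (P1 : Matrix (Fin N1) (Fin N1) ℝ) (P2 : Matrix (Fin N2) (Fin N2) ℝ)
    (P3 : Matrix (Fin N3) (Fin N3) ℝ)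
    (hP1symm : P1.IsSymm) (hP1idem : P1 * P1 = P1) (hP1rank : P1.rank ≤ r1)
    (hP2symm : P2.IsSymm) (hP2idem : P2 * P2 = P2) (hP2rank : P2.rank ≤ r2)
    (hP3symm : P3.IsSymm) (hP3idem : P3 * P3 = P3) (hP3rank : P3.rank ≤ r3)
    (hP1min : ∀ P : Matrix (Fin N1) (Fin N1) ℝ, P.IsSymm → P * P = P → P.rank ≤ r1 →
      mnorm (mat1 U - P1 * mat1 U) ≤ mnorm (mat1 U - P * mat1 U))
    (hP2min : ∀ P : Matrix (Fin N2) (Fin N2) ℝ, P.IsSymm → P * P = P → P.rank ≤ r2 →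
      mnorm (mat2 U - P2 * mat2 U) ≤ mnorm (mat2 U - P * mat2 U))
    (hP3min : ∀ P : Matrix (Fin N3) (Fin N3) ℝ, P.IsSymm → P * P = P → P.rank ≤ r3 →
      mnorm (mat3 U - P3 * mat3 U) ≤ mnorm (mat3 U - P * mat3 U))
    (Ustar : Fin N1 → Fin N2 → Fin N3 → ℝ)
    (hUstar : Ustar = mode1 P1 (mode2 P2 (mode3 P3 U))) :
    ∀ X : Fin N1 → Fin N2 → Fin N3 → ℝ, HasMultilinearRankLE X r1 r2 r3 →
      tnorm (U - Ustar) ≤ Real.sqrt 3 * tnorm (U - X) := by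
  rintro X ⟨G, V1, V2, V3, hX⟩
  -- projections fixing the column spans of the factor matrices
  obtain ⟨Q1, hQ1s, hQ1i, hQ1r, hQ1V⟩ := exists_proj V1
  obtain ⟨Q2, hQ2s, hQ2i, hQ2r, hQ2V⟩ := exists_proj V2
  obtain ⟨Q3, hQ3s, hQ3i, hQ3r, hQ3V⟩ := exists_proj V3
  -- matricizations of X factor through the Vₙ
  have hmat1X : Q1 * mat1 X = mat1 X := by
    have hfac : mat1 X = V1 * (Matrix.of fun a (p : Fin N2 × Fin N3) =>
        ∑ b, ∑ c, V2 p.1 b * V3 p.2 c * G a b c) := by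
      ext i p
      simp only [mat1, Matrix.of_apply, hX, Matrix.mul_apply, Finset.mul_sum]
      refine Finset.sum_congr rfl fun a _ => Finset.sum_congr rfl fun b _ =>
        Finset.sum_congr rfl fun c _ => by ring
    rw [hfac, ← Matrix.mul_assoc, hQ1V]
  have hmat2X : Q2 * mat2 X = mat2 X := by
    have hfac : mat2 X = V2 * (Matrix.of fun b (p : Fin N1 × Fin N3) =>
        ∑ a, ∑ c, V1 p.1 a * V3 p.2 c * G a b c) := by
      ext j p
      simp only [mat2, Matrix.of_apply, hX, Matrix.mul_apply, Finset.mul_sum]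
      rw [Finset.sum_comm]
      refine Finset.sum_congr rfl fun b _ => Finset.sum_congr rfl fun a _ =>
        Finset.sum_congr rfl fun c _ => by ring
    rw [hfac, ← Matrix.mul_assoc, hQ2V]
  have hmat3X : Q3 * mat3 X = mat3 X := by
    have hfac : mat3 X = V3 * (Matrix.of fun c (p : Fin N1 × Fin N2) =>
        ∑ a, ∑ b, V1 p.1 a * V2 p.2 b * G a b c) := by
      ext k p
      show X p.1 p.2 k = _
      rw [hX]
      show ∑ a, ∑ b, ∑ c, V1 p.1 a * V2 p.2 b * V3 k c * G a b c = _
      rw [sum3_rot fun a b c => V1 p.1 a * V2 p.2 b * V3 k c * G a b c]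
      simp only [Matrix.mul_apply, Matrix.of_apply, Finset.mul_sum]
      refine Finset.sum_congr rfl fun c _ => Finset.sum_congr rfl fun a _ =>
        Finset.sum_congr rfl fun b _ => by ring
    rw [hfac, ← Matrix.mul_assoc, hQ3V]
  -- generic per-mode bound
  have key : ∀ {N : ℕ} {m : Type} [Fintype m] (P Q : Matrix (Fin N) (Fin N) ℝ) (A B : Matrix (Fin N) m ℝ),
      P.IsSymm → Q.IsSymm → Q * Q = Q → Q * B = B →
      (mnorm (A - P * A) ≤ mnorm (A - Q * A)) →
      msq ((1 - P : Matrix (Fin N) (Fin N) ℝ) * A) ≤ msq (A - B) := by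
    intro N m _ P Q A B hPs hQs hQi hQB hmin
    have hsub : ∀ (R : Matrix (Fin N) (Fin N) ℝ),
        A - R * A = ((1 - R : Matrix (Fin N) (Fin N) ℝ)) * A := by
      intro R; rw [Matrix.sub_mul, Matrix.one_mul]
    rw [hsub, hsub] at hmin
    have h1 : msq (((1 - P : Matrix (Fin N) (Fin N) ℝ)) * A) ≤
        msq (((1 - Q : Matrix (Fin N) (Fin N) ℝ)) * A) := by
      have := hmin
      rw [mnorm_eq_sqrt_msq, mnorm_eq_sqrt_msq] at this
      exact (Real.sqrt_le_sqrt_iff (msq_nonneg _)).mp this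
    have h2 : ((1 - Q : Matrix (Fin N) (Fin N) ℝ)) * A =
        ((1 - Q : Matrix (Fin N) (Fin N) ℝ)) * (A - B) := by
      have hz : ((1 - Q : Matrix (Fin N) (Fin N) ℝ)) * B = 0 := by
        rw [Matrix.sub_mul, Matrix.one_mul, hQB, sub_self]
      rw [Matrix.mul_sub, hz, sub_zero]
    have hQs' : ((1 - Q : Matrix (Fin N) (Fin N) ℝ)).IsSymm :=
      (Matrix.isSymm_one).sub hQs
    have hQi' : ((1 - Q : Matrix (Fin N) (Fin N) ℝ)) * (1 - Q) = (1 - Q) := by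
      rw [Matrix.mul_sub, Matrix.mul_one, Matrix.sub_mul, Matrix.one_mul, hQi, sub_self, sub_zero]
    calc msq (((1 - P : Matrix (Fin N) (Fin N) ℝ)) * A)
        ≤ msq (((1 - Q : Matrix (Fin N) (Fin N) ℝ)) * A) := h1
      _ = msq (((1 - Q : Matrix (Fin N) (Fin N) ℝ)) * (A - B)) := by rw [h2]
      _ ≤ msq (A - B) := msq_proj_le _ hQs' hQi' _
  -- matricization of differences
  have hmat1sub : mat1 U - mat1 X = mat1 (U - X) := by ext i p; simp [mat1]
  have hmat2sub : mat2 U - mat2 X = mat2 (U - X) := by ext j p; simp [mat2]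
  have hmat3sub : mat3 U - mat3 X = mat3 (U - X) := by ext k p; simp [mat3]
  -- per-mode bounds at tensor level
  have key1 : tsq (mode1 ((1 - P1 : Matrix (Fin N1) (Fin N1) ℝ)) U) ≤ tsq (U - X) := by
    rw [tsq_eq_msq1, mat1_mode1, tsq_eq_msq1, ← hmat1sub]
    exact key P1 Q1 (mat1 U) (mat1 X) hP1symm hQ1s hQ1i hmat1X (hP1min Q1 hQ1s hQ1i hQ1r)
  have key2 : tsq (mode2 ((1 - P2 : Matrix (Fin N2) (Fin N2) ℝ)) U) ≤ tsq (U - X) := by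
    rw [tsq_eq_msq2, mat2_mode2, tsq_eq_msq2, ← hmat2sub]
    exact key P2 Q2 (mat2 U) (mat2 X) hP2symm hQ2s hQ2i hmat2X (hP2min Q2 hQ2s hQ2i hQ2r)
  have key3 : tsq (mode3 ((1 - P3 : Matrix (Fin N3) (Fin N3) ℝ)) U) ≤ tsq (U - X) := by
    rw [tsq_eq_msq3, mat3_mode3, tsq_eq_msq3, ← hmat3sub]
    exact key P3 Q3 (mat3 U) (mat3 X) hP3symm hQ3s hQ3i hmat3X (hP3min Q3 hQ3s hQ3i hQ3r)
  -- decomposition of the error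
  set D1 := mode1 ((1 - P1 : Matrix (Fin N1) (Fin N1) ℝ)) U with hD1
  set D2 := mode1 P1 (mode2 ((1 - P2 : Matrix (Fin N2) (Fin N2) ℝ)) U) with hD2
  set D3 := mode1 P1 (mode2 P2 (mode3 ((1 - P3 : Matrix (Fin N3) (Fin N3) ℝ)) U)) with hD3
  have hsum : U - Ustar = D1 + D2 + D3 := by
    rw [hUstar, hD1, hD2, hD3, mode1_sub_one, mode2_sub_one, mode3_sub_one,
      mode2_tsub, mode1_tsub, mode1_tsub]
    abel
  -- orthogonality of cross terms
  have orth : ∀ {N : ℕ} (P : Matrix (Fin N) (Fin N) ℝ), P.IsSymm → P * P = P →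
      ((1 - P : Matrix (Fin N) (Fin N) ℝ))ᵀ * P = 0 := by
    intro N P hs hi
    rw [Matrix.transpose_sub, Matrix.transpose_one, hs.eq, Matrix.sub_mul, Matrix.one_mul, hi,
      sub_self]
  have hc12 : tcross D1 D2 = 0 :=
    tcross_mode1_zero _ P1 (orth P1 hP1symm hP1idem) _ _
  have hc13 : tcross D1 D3 = 0 :=
    tcross_mode1_zero _ P1 (orth P1 hP1symm hP1idem) _ _
  have hc23 : tcross D2 D3 = 0 := by
    have e2 : D2 = mode2 ((1 - P2 : Matrix (Fin N2) (Fin N2) ℝ)) (mode1 P1 U) := by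
      rw [hD2, mode1_mode2]
    have e3 : D3 = mode2 P2 (mode1 P1 (mode3 ((1 - P3 : Matrix (Fin N3) (Fin N3) ℝ)) U)) := by
      rw [hD3, mode1_mode2]
    rw [e2, e3]
    exact tcross_mode2_zero _ P2 (orth P2 hP2symm hP2idem) _ _
  -- Pythagoras + contractions
  have hpyth : tsq (U - Ustar) = tsq D1 + tsq D2 + tsq D3 := by
    rw [hsum]; exact tsq_add3 _ _ _ hc12 hc13 hc23
  have hb2 : tsq D2 ≤ tsq (U - X) := by
    refine le_trans ?_ key2
    exact tsq_mode1_le P1 hP1symm hP1idem _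
  have hb3 : tsq D3 ≤ tsq (U - X) := by
    refine le_trans (tsq_mode1_le P1 hP1symm hP1idem _) ?_
    refine le_trans (tsq_mode2_le P2 hP2symm hP2idem _) ?_
    exact key3
  have htotal : tsq (U - Ustar) ≤ 3 * tsq (U - X) := by
    rw [hpyth]; linarith [key1, hb2, hb3]
  -- conclude
  rw [tnorm_eq_sqrt_tsq, tnorm_eq_sqrt_tsq, ← Real.sqrt_mul (by norm_num : (0:ℝ) ≤ 3)]
  exact Real.sqrt_le_sqrt htotal

end HOSVD
end

section
/- Let U ∈ ℝ^{N1×N2×N3} be a third-order tensor and let P₁ ∈ ℝ^{N1×N1}, P₂ ∈ ℝ^{N2×N2}, P₃ ∈ ℝ^{N3×N3} be orthogonal projections. Then the squared Frobenius error of the simultaneous three-mode projection is bounded by the sum of the single-mode projection errors: ‖U − U ×₁ P₁ ×₂ P₂ ×₃ P₃‖² ≤ ‖U − U ×₁ P₁‖² + ‖U − U ×₂ P₂‖² + ‖U − U ×₃ P₃‖². -/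
open Matrix Finset

namespace ProjErr

/-- Frobenius norm of a third-order tensor. -/
noncomputable def tnorm {N1 N2 N3 : ℕ} (U : Fin N1 → Fin N2 → Fin N3 → ℝ) : ℝ :=
  Real.sqrt (∑ i, ∑ j, ∑ k, (U i j k) ^ 2)

/-- Mode-1 product of a third-order tensor with a matrix. -/
def mode1 {N1 N2 N3 M : ℕ} (V : Matrix (Fin M) (Fin N1) ℝ)
    (U : Fin N1 → Fin N2 → Fin N3 → ℝ) : Fin M → Fin N2 → Fin N3 → ℝ :=
  fun i' j k => ∑ i, V i' i * U i j k

/-- Mode-2 product of a third-order tensor with a matrix. -/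
def mode2 {N1 N2 N3 M : ℕ} (V : Matrix (Fin M) (Fin N2) ℝ)
    (U : Fin N1 → Fin N2 → Fin N3 → ℝ) : Fin N1 → Fin M → Fin N3 → ℝ :=
  fun i j' k => ∑ j, V j' j * U i j k

/-- Mode-3 product of a third-order tensor with a matrix. -/
def mode3 {N1 N2 N3 M : ℕ} (V : Matrix (Fin M) (Fin N3) ℝ)
    (U : Fin N1 → Fin N2 → Fin N3 → ℝ) : Fin N1 → Fin N2 → Fin M → ℝ :=
  fun i j k' => ∑ k, V k' k * U i j k

/-- Sum of squared entries of a third-order tensor. -/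
def S3 {N1 N2 N3 : ℕ} (U : Fin N1 → Fin N2 → Fin N3 → ℝ) : ℝ :=
  ∑ i, ∑ j, ∑ k, (U i j k) ^ 2

lemma ortho {n : ℕ} (P : Matrix (Fin n) (Fin n) ℝ) (hs : P.IsSymm) (hi : P * P = P)
    (v w : Fin n → ℝ) :
    ∑ i, (v i - P.mulVec v i) * P.mulVec w i = 0 := by
  have hPa : P.mulVec (fun i => v i - P.mulVec v i) = 0 := by
    have h : P.mulVec (v - P.mulVec v) = 0 := by
      rw [Matrix.mulVec_sub, Matrix.mulVec_mulVec, hi, sub_self]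
    exact h
  calc ∑ i, (v i - P.mulVec v i) * P.mulVec w i
      = ∑ i, ∑ j, (v i - P.mulVec v i) * (P i j * w j) := by
        simp [Matrix.mulVec, dotProduct, Finset.mul_sum]
    _ = ∑ j, (∑ i, P j i * (v i - P.mulVec v i)) * w j := by
        rw [Finset.sum_comm]
        refine Finset.sum_congr rfl fun j _ => ?_
        rw [Finset.sum_mul]
        refine Finset.sum_congr rfl fun i _ => ?_
        have hij : P i j = P j i := by
          conv_lhs => rw [← hs]
          rfl
        rw [hij]; ring
    _ = ∑ j, (P.mulVec (fun i => v i - P.mulVec v i) j) * w j := by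
        simp [Matrix.mulVec, dotProduct]
    _ = 0 := by rw [hPa]; simp

lemma sum_sq_expand {n : ℕ} (a b : Fin n → ℝ) :
    ∑ i, (a i + b i) ^ 2 = ∑ i, a i ^ 2 + 2 * ∑ i, a i * b i + ∑ i, b i ^ 2 := by
  rw [Finset.mul_sum, ← Finset.sum_add_distrib, ← Finset.sum_add_distrib]
  refine Finset.sum_congr rfl fun i _ => by ring

lemma vec_key {n : ℕ} (P : Matrix (Fin n) (Fin n) ℝ) (hs : P.IsSymm) (hi : P * P = P)
    (u y : Fin n → ℝ) :
    ∑ i, (u i - P.mulVec y i) ^ 2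
      ≤ ∑ i, (u i - P.mulVec u i) ^ 2 + ∑ i, (u i - y i) ^ 2 := by
  set w : Fin n → ℝ := fun i => u i - y i with hw
  have hmw : P.mulVec w = P.mulVec u - P.mulVec y := by
    have h : w = u - y := rfl
    rw [h, Matrix.mulVec_sub]
  have hsplit : ∀ i, u i - P.mulVec y i = (u i - P.mulVec u i) + P.mulVec w i := by
    intro i; rw [hmw]; simp
  have h1 : ∑ i, (u i - P.mulVec y i) ^ 2
      = ∑ i, (u i - P.mulVec u i) ^ 2 + ∑ i, (P.mulVec w i) ^ 2 := by
    calc ∑ i, (u i - P.mulVec y i) ^ 2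
        = ∑ i, ((u i - P.mulVec u i) + P.mulVec w i) ^ 2 :=
          Finset.sum_congr rfl fun i _ => by rw [hsplit i]
      _ = ∑ i, (u i - P.mulVec u i) ^ 2 + 2 * ∑ i, (u i - P.mulVec u i) * P.mulVec w i
            + ∑ i, (P.mulVec w i) ^ 2 := sum_sq_expand _ _
      _ = _ := by rw [ortho P hs hi u w]; ring
  have h2 : ∑ i, (P.mulVec w i) ^ 2 ≤ ∑ i, w i ^ 2 := by
    have hw2 : ∑ i, w i ^ 2 = ∑ i, ((w i - P.mulVec w i) + P.mulVec w i) ^ 2 :=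
      Finset.sum_congr rfl fun i _ => by ring_nf
    rw [hw2, sum_sq_expand, ortho P hs hi w w]
    have hnn : (0:ℝ) ≤ ∑ i, (w i - P.mulVec w i) ^ 2 :=
      Finset.sum_nonneg fun i _ => sq_nonneg _
    linarith
  rw [h1]; exact add_le_add_right h2 _

lemma mode1_key {N1 N2 N3 : ℕ} (P : Matrix (Fin N1) (Fin N1) ℝ)
    (hs : P.IsSymm) (hi : P * P = P) (U Y : Fin N1 → Fin N2 → Fin N3 → ℝ) :
    S3 (U - mode1 P Y) ≤ S3 (U - mode1 P U) + S3 (U - Y) := by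
  have rearr : ∀ X : Fin N1 → Fin N2 → Fin N3 → ℝ,
      S3 X = ∑ j, ∑ k, ∑ i, X i j k ^ 2 := by
    intro X
    rw [S3, Finset.sum_comm]
    exact Finset.sum_congr rfl fun j _ => Finset.sum_comm
  rw [rearr, rearr, rearr, ← Finset.sum_add_distrib]
  refine Finset.sum_le_sum fun j _ => ?_
  rw [← Finset.sum_add_distrib]
  refine Finset.sum_le_sum fun k _ => ?_
  simpa [mode1, Matrix.mulVec, dotProduct] using
    vec_key P hs hi (fun i => U i j k) (fun i => Y i j k)

lemma mode2_key {N1 N2 N3 : ℕ} (P : Matrix (Fin N2) (Fin N2) ℝ)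
    (hs : P.IsSymm) (hi : P * P = P) (U Y : Fin N1 → Fin N2 → Fin N3 → ℝ) :
    S3 (U - mode2 P Y) ≤ S3 (U - mode2 P U) + S3 (U - Y) := by
  have rearr : ∀ X : Fin N1 → Fin N2 → Fin N3 → ℝ,
      S3 X = ∑ i, ∑ k, ∑ j, X i j k ^ 2 :=
    fun X => Finset.sum_congr rfl fun i _ => Finset.sum_comm
  rw [rearr, rearr, rearr, ← Finset.sum_add_distrib]
  refine Finset.sum_le_sum fun i _ => ?_
  rw [← Finset.sum_add_distrib]
  refine Finset.sum_le_sum fun k _ => ?_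
  simpa [mode2, Matrix.mulVec, dotProduct] using
    vec_key P hs hi (fun j => U i j k) (fun j => Y i j k)

lemma mode3_key {N1 N2 N3 : ℕ} (P : Matrix (Fin N3) (Fin N3) ℝ)
    (hs : P.IsSymm) (hi : P * P = P) (U Y : Fin N1 → Fin N2 → Fin N3 → ℝ) :
    S3 (U - mode3 P Y) ≤ S3 (U - mode3 P U) + S3 (U - Y) := by
  rw [S3, S3, S3, ← Finset.sum_add_distrib]
  refine Finset.sum_le_sum fun i _ => ?_
  rw [← Finset.sum_add_distrib]
  refine Finset.sum_le_sum fun j _ => ?_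
  simpa [mode3, Matrix.mulVec, dotProduct] using
    vec_key P hs hi (fun k => U i j k) (fun k => Y i j k)

lemma tnorm_sq {N1 N2 N3 : ℕ} (X : Fin N1 → Fin N2 → Fin N3 → ℝ) :
    tnorm X ^ 2 = S3 X :=
  Real.sq_sqrt (Finset.sum_nonneg fun _ _ => Finset.sum_nonneg fun _ _ =>
    Finset.sum_nonneg fun _ _ => sq_nonneg _)

/-- The squared Frobenius error of the simultaneous three-mode orthogonal projection is
bounded by the sum of the squared single-mode projection errors. -/
theorem three_mode_projection_error
    {N1 N2 N3 : ℕ} (U : Fin N1 → Fin N2 → Fin N3 → ℝ)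
    (P1 : Matrix (Fin N1) (Fin N1) ℝ) (P2 : Matrix (Fin N2) (Fin N2) ℝ)
    (P3 : Matrix (Fin N3) (Fin N3) ℝ)
    (hP1symm : P1.IsSymm) (hP1idem : P1 * P1 = P1)
    (hP2symm : P2.IsSymm) (hP2idem : P2 * P2 = P2)
    (hP3symm : P3.IsSymm) (hP3idem : P3 * P3 = P3) :
    tnorm (U - mode1 P1 (mode2 P2 (mode3 P3 U))) ^ 2
      ≤ tnorm (U - mode1 P1 U) ^ 2 + tnorm (U - mode2 P2 U) ^ 2
        + tnorm (U - mode3 P3 U) ^ 2 := by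
  rw [tnorm_sq, tnorm_sq, tnorm_sq, tnorm_sq]
  calc S3 (U - mode1 P1 (mode2 P2 (mode3 P3 U)))
      ≤ S3 (U - mode1 P1 U) + S3 (U - mode2 P2 (mode3 P3 U)) :=
        mode1_key P1 hP1symm hP1idem U _
    _ ≤ S3 (U - mode1 P1 U) + (S3 (U - mode2 P2 U) + S3 (U - mode3 P3 U)) :=
        add_le_add_right (mode2_key P2 hP2symm hP2idem U _) _
    _ = _ := by ring

end ProjErr
end

section
/- Let F ∈ ℝ^{N×N} be symmetric negative semidefinite, let S₁ ∈ ℝ^{p×p} and S₂ ∈ ℝ^{q×q} be symmetric negative semidefinite, and let Δt > 0. Then for every W ∈ ℝ^{N×pq}, the Sylvester equation arising in the K-steps of the 3d-RAIL scheme, (I_N − Δt F) K − K · Δt (S₁ ⊗ I_q + I_p ⊗ S₂) = W, has a unique solution K ∈ ℝ^{N×pq}. -/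
open Matrix Kronecker Finset

private lemma kron_left_nsd {p q : ℕ} (S₁ : Matrix (Fin p) (Fin p) ℝ)
    (hS₁neg : ∀ x : Fin p → ℝ, x ⬝ᵥ S₁.mulVec x ≤ 0)
    (x : Fin p × Fin q → ℝ) :
    x ⬝ᵥ (S₁ ⊗ₖ (1 : Matrix (Fin q) (Fin q) ℝ)).mulVec x ≤ 0 := by
  have h : x ⬝ᵥ (S₁ ⊗ₖ (1 : Matrix (Fin q) (Fin q) ℝ)).mulVec x
      = ∑ b : Fin q, (fun a => x (a,b)) ⬝ᵥ S₁.mulVec (fun a => x (a,b)) := by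
    simp [dotProduct, Matrix.mulVec, Fintype.sum_prod_type, Matrix.one_apply,
      mul_ite, Finset.mul_sum]
    rw [Finset.sum_comm]
  rw [h]
  exact Finset.sum_nonpos fun b _ => hS₁neg _

private lemma kron_right_nsd {p q : ℕ} (S₂ : Matrix (Fin q) (Fin q) ℝ)
    (hS₂neg : ∀ x : Fin q → ℝ, x ⬝ᵥ S₂.mulVec x ≤ 0)
    (x : Fin p × Fin q → ℝ) :
    x ⬝ᵥ ((1 : Matrix (Fin p) (Fin p) ℝ) ⊗ₖ S₂).mulVec x ≤ 0 := by
  have h : x ⬝ᵥ ((1 : Matrix (Fin p) (Fin p) ℝ) ⊗ₖ S₂).mulVec x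
      = ∑ a : Fin p, (fun b => x (a,b)) ⬝ᵥ S₂.mulVec (fun b => x (a,b)) := by
    simp [dotProduct, Matrix.mulVec, Fintype.sum_prod_type, Matrix.one_apply,
      ite_mul, Finset.mul_sum]
  rw [h]
  exact Finset.sum_nonpos fun b _ => hS₂neg _

private lemma sylv_inj_core {N : ℕ} {n : Type*} [Fintype n] [DecidableEq n]
    (F : Matrix (Fin N) (Fin N) ℝ) (M : Matrix n n ℝ)
    (hFneg : ∀ x : Fin N → ℝ, x ⬝ᵥ F.mulVec x ≤ 0)
    (hMsymm : M.IsSymm) (hMneg : ∀ x : n → ℝ, x ⬝ᵥ M.mulVec x ≤ 0)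
    {Δt : ℝ} (hΔt : 0 < Δt)
    (K : Matrix (Fin N) n ℝ)
    (h : (1 - Δt • F) * K - K * (Δt • M) = 0) : K = 0 := by
  set A : Matrix (Fin N) (Fin N) ℝ := 1 - Δt • F with hAdef
  set B : Matrix n n ℝ := Δt • M with hBdef
  have hAB : A * K = K * B := sub_eq_zero.mp h
  have e2 : ∀ j, ∑ i, K i j * (A * K) i j
      = (∑ i, K i j * K i j)
        - Δt * ((fun i => K i j) ⬝ᵥ F.mulVec (fun i => K i j)) := by
    intro j
    have hA : A * K = K - Δt • (F * K) := by
      rw [hAdef, Matrix.sub_mul, Matrix.one_mul, Matrix.smul_mul]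
    have hterm : ∀ i, K i j * (A * K) i j
        = K i j * K i j - Δt * (K i j * (F * K) i j) := by
      intro i; rw [hA]; simp [Matrix.sub_apply]; ring
    rw [Finset.sum_congr rfl fun i _ => hterm i, Finset.sum_sub_distrib,
      ← Finset.mul_sum]
    congr 2
  have e3 : ∀ i, ∑ j, K i j * (K * B) i j
      = Δt * ((fun j => K i j) ⬝ᵥ M.mulVec (fun j => K i j)) := by
    intro i
    simp only [hBdef, dotProduct, Matrix.mulVec, Matrix.mul_apply,
      Matrix.smul_apply, smul_eq_mul, Finset.mul_sum]
    rw [Finset.sum_comm]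
    refine Finset.sum_congr rfl fun k _ => Finset.sum_congr rfl fun j _ => ?_
    rw [hMsymm.apply j k]
    ring
  have hchain : ∑ j, ∑ i, K i j * K i j ≤ 0 := by
    have h1 : ∑ j, ∑ i, K i j * K i j ≤ ∑ j, ∑ i, K i j * (A * K) i j := by
      refine Finset.sum_le_sum fun j _ => ?_
      rw [e2]
      have := hFneg (fun i => K i j)
      nlinarith
    have h2 : ∑ j, ∑ i, K i j * (A * K) i j = ∑ i, ∑ j, K i j * (K * B) i j := by
      rw [hAB, Finset.sum_comm]
    have h3 : ∑ i, ∑ j, K i j * (K * B) i j ≤ 0 := by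
      refine Finset.sum_nonpos fun i _ => ?_
      rw [e3]
      exact mul_nonpos_of_nonneg_of_nonpos hΔt.le (hMneg _)
    linarith
  ext i j
  have h1 : K i j * K i j ≤ ∑ i', K i' j * K i' j :=
    Finset.single_le_sum (f := fun i' => K i' j * K i' j)
      (fun i' _ => mul_self_nonneg _) (mem_univ i)
  have h2 : ∑ i', K i' j * K i' j ≤ ∑ j', ∑ i', K i' j' * K i' j' :=
    Finset.single_le_sum (f := fun j' => ∑ i', K i' j' * K i' j')
      (fun j' _ => Finset.sum_nonneg fun i' _ => mul_self_nonneg _)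
      (mem_univ j)
  have : K i j * K i j = 0 := le_antisymm (by linarith) (mul_self_nonneg _)
  simpa using mul_self_eq_zero.mp this

/-- The Sylvester equation arising in the K-steps of the 3d-RAIL scheme,
`(I − Δt F) K − K Δt (S₁ ⊗ I + I ⊗ S₂) = W`, has a unique solution for every
right-hand side `W`, provided `F, S₁, S₂` are symmetric negative semidefinite
and `Δt > 0`. -/
theorem kstep_sylvester_unique_solution
    {N p q : ℕ}
    (F : Matrix (Fin N) (Fin N) ℝ)
    (S₁ : Matrix (Fin p) (Fin p) ℝ) (S₂ : Matrix (Fin q) (Fin q) ℝ)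
    (hF : F.IsSymm) (hFneg : ∀ x : Fin N → ℝ, x ⬝ᵥ F.mulVec x ≤ 0)
    (hS₁ : S₁.IsSymm) (hS₁neg : ∀ x : Fin p → ℝ, x ⬝ᵥ S₁.mulVec x ≤ 0)
    (hS₂ : S₂.IsSymm) (hS₂neg : ∀ x : Fin q → ℝ, x ⬝ᵥ S₂.mulVec x ≤ 0)
    (Δt : ℝ) (hΔt : 0 < Δt) (W : Matrix (Fin N) (Fin p × Fin q) ℝ) :
    ∃! K : Matrix (Fin N) (Fin p × Fin q) ℝ,
      (1 - Δt • F) * K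
        - K * (Δt • (S₁ ⊗ₖ (1 : Matrix (Fin q) (Fin q) ℝ)
            + (1 : Matrix (Fin p) (Fin p) ℝ) ⊗ₖ S₂)) = W := by
  set M : Matrix (Fin p × Fin q) (Fin p × Fin q) ℝ :=
    S₁ ⊗ₖ (1 : Matrix (Fin q) (Fin q) ℝ)
      + (1 : Matrix (Fin p) (Fin p) ℝ) ⊗ₖ S₂ with hMdef
  have hMsymm : M.IsSymm := by
    unfold Matrix.IsSymm
    rw [hMdef, Matrix.transpose_add, ← Matrix.kroneckerMap_transpose,
      ← Matrix.kroneckerMap_transpose, Matrix.transpose_one, Matrix.transpose_one, hS₁, hS₂]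
  have hMneg : ∀ x : Fin p × Fin q → ℝ, x ⬝ᵥ M.mulVec x ≤ 0 := by
    intro x
    rw [hMdef, Matrix.add_mulVec, dotProduct_add]
    exact add_nonpos (kron_left_nsd S₁ hS₁neg x) (kron_right_nsd S₂ hS₂neg x)
  set L : Matrix (Fin N) (Fin p × Fin q) ℝ →ₗ[ℝ] Matrix (Fin N) (Fin p × Fin q) ℝ :=
    { toFun := fun K => (1 - Δt • F) * K - K * (Δt • M)
      map_add' := fun x y => by simp [Matrix.mul_add, Matrix.add_mul]; abel
      map_smul' := fun c x => by
        simp [Matrix.mul_smul, Matrix.smul_mul, smul_sub, smul_comm Δt c] } with hL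
  have hLapp : ∀ K, L K = (1 - Δt • F) * K - K * (Δt • M) := fun K => rfl
  have hLinj : Function.Injective L := by
    rw [injective_iff_map_eq_zero]
    intro K hK
    exact sylv_inj_core F M hFneg hMsymm hMneg hΔt K (by rwa [hLapp] at hK)
  have hLsurj : Function.Surjective L := (LinearMap.injective_iff_surjective).mp hLinj
  obtain ⟨K, hK⟩ := hLsurj W
  refine ⟨K, by simpa [hLapp] using hK, fun y hy => hLinj ?_⟩
  simp only [hLapp]
  simpa [hLapp] using hy.trans hK.symm
end

section
/- Let V be a finite set of grid points v = (v₁, v₂, v₃) ∈ ℝ³, let w : V → ℝ be positive, and let P be the orthogonal projection, with respect to the weighted inner product ⟨f, g⟩_w = Σ_{v∈V} f(v) g(v) / w(v), onto W = span{ w, w·v₁, w·v₂, w·v₃, w·(v₁²+v₂²+v₃²) }. Then for every function f* on V and every map T from functions on V to functions on V (e.g., any truncation operator), the LoMaC output f := P f* + (I − P)( T( (I − P) f* ) ) has exactly the same discrete mass, momentum, and energy as f*: for every φ ∈ {1, v₁, v₂, v₃, (v₁²+v₂²+v₃²)/2}, Σ_{v∈V} f(v) φ(v) = Σ_{v∈V}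 f*(v) φ(v). -/
open Finset

namespace LoMaC

/-- The five-dimensional subspace `W = span{w, w·v₁, w·v₂, w·v₃, w·(v₁²+v₂²+v₃²)}`
of functions on the grid, used in the LoMaC orthogonal projection. -/
def Wspan {ι : Type*} (v1 v2 v3 w : ι → ℝ) : Submodule ℝ (ι → ℝ) :=
  Submodule.span ℝ
    ({w, fun i => w i * v1 i, fun i => w i * v2 i, fun i => w i * v3 i,
      fun i => w i * (v1 i ^ 2 + v2 i ^ 2 + v3 i ^ 2)} : Set (ι → ℝ))

/-- The LoMaC truncation is conservative: for any truncation operator `T`, the output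
`f = P f* + (I − P)(T((I − P) f*))` has exactly the same discrete mass, momentum, and
energy as `f*`, where `P` is the orthogonal projection onto `W` with respect to the
weighted inner product `⟨f, g⟩_w = Σ_v f(v) g(v) / w(v)`. -/
theorem lomac_conserves_moments
    {ι : Type*} [Fintype ι]
    (v1 v2 v3 : ι → ℝ) (w : ι → ℝ) (hw : ∀ i, 0 < w i)
    (P : (ι → ℝ) → (ι → ℝ))
    (hPmem : ∀ f : ι → ℝ, P f ∈ Wspan v1 v2 v3 w)
    (hPorth : ∀ f : ι → ℝ, ∀ h ∈ Wspan v1 v2 v3 w,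
      ∑ i, (f i - P f i) * h i / w i = 0) :
    ∀ (fstar : ι → ℝ) (T : (ι → ℝ) → (ι → ℝ)) (f : ι → ℝ),
      f = (fun i => P fstar i
            + (T (fun j => fstar j - P fstar j) i
                - P (T (fun j => fstar j - P fstar j)) i)) →
      (∑ i, f i * 1 = ∑ i, fstar i * 1) ∧
      (∑ i, f i * v1 i = ∑ i, fstar i * v1 i) ∧
      (∑ i, f i * v2 i = ∑ i, fstar i * v2 i) ∧
      (∑ i, f i * v3 i = ∑ i, fstar i * v3 i) ∧
      (∑ i, f i * ((v1 i ^ 2 + v2 i ^ 2 + v3 i ^ 2) / 2)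
        = ∑ i, fstar i * ((v1 i ^ 2 + v2 i ^ 2 + v3 i ^ 2) / 2)) := by
  intro fstar T f hf
  -- key: moments of (g - P g) against φ vanish whenever w·φ ∈ W
  have key : ∀ (g φ : ι → ℝ), (fun i => w i * φ i) ∈ Wspan v1 v2 v3 w →
      ∑ i, (g i - P g i) * φ i = 0 := by
    intro g φ hφ
    have h := hPorth g _ hφ
    rw [← h]
    refine Finset.sum_congr rfl fun i _ => ?_
    have hwi : w i ≠ 0 := (hw i).ne'
    field_simp
  have main : ∀ φ : ι → ℝ, (fun i => w i * φ i) ∈ Wspan v1 v2 v3 w →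
      ∑ i, f i * φ i = ∑ i, fstar i * φ i := by
    intro φ hφ
    have e1 := key fstar φ hφ
    have e2 := key (T fun j => fstar j - P fstar j) φ hφ
    subst hf
    simp only [sub_mul, add_mul, Finset.sum_add_distrib, Finset.sum_sub_distrib] at *
    linarith
  have m1 : (fun i => w i * (1:ℝ)) ∈ Wspan v1 v2 v3 w := by
    have : (fun i => w i * (1:ℝ)) = w := by funext i; ring
    rw [this]
    exact Submodule.subset_span (by simp)
  have m2 : (fun i => w i * v1 i) ∈ Wspan v1 v2 v3 w :=
    Submodule.subset_span (by simp [Set.mem_insert_iff])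
  have m3 : (fun i => w i * v2 i) ∈ Wspan v1 v2 v3 w :=
    Submodule.subset_span (by simp [Set.mem_insert_iff])
  have m4 : (fun i => w i * v3 i) ∈ Wspan v1 v2 v3 w :=
    Submodule.subset_span (by simp [Set.mem_insert_iff])
  have m5 : (fun i => w i * ((v1 i ^ 2 + v2 i ^ 2 + v3 i ^ 2) / 2)) ∈ Wspan v1 v2 v3 w := by
    have h5 : (fun i => w i * (v1 i ^ 2 + v2 i ^ 2 + v3 i ^ 2)) ∈ Wspan v1 v2 v3 w :=
      Submodule.subset_span (by simp [Set.mem_insert_iff])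
    have := Submodule.smul_mem (Wspan v1 v2 v3 w) (1/2 : ℝ) h5
    convert this using 1
    funext i
    simp [Pi.smul_apply, smul_eq_mul]
    ring
  exact ⟨main _ m1, main _ m2, main _ m3, main _ m4, main _ m5⟩

end LoMaC
end
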